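/- arXiv:1709.08215 — 7 statements merged into one kernel-verified Lean document; each statement's English description precedes it below -/
import Mathlib

section
/- Let E be a real inner product space, let u, v ∈ E be unit vectors (‖u‖ = 1 and ‖v‖ = 1), and let a, b, t be real numbers with a ≥ 0, b ≥ 0 and t ≥ 0. Then ‖(a+t)•u − (b+t)•v‖ ≥ ‖a•u − b•v‖. In particular, if initially ‖a•u − b•v‖ > 2r for some r > 0, then after both points travel an additional distance t radially outward from the common center their distance still exceeds 2r, so two simultaneously moving robots in a linear expansion never collide. -/
/-! Moving both points a further distance `t` adds `t • (u - v)` to their difference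
`a • u - b • v`, and for unit vectors `⟪a • u - b • v, u - v⟫ = (a + b) (1 - ⟪u, v⟫) ≥ 0`.
A displacement making a nonnegative inner product with a vector can only lengthen it. -/

open RealInnerProductSpace

theorem norm_le_norm_add_smul_of_inner_nonneg {E : Type*} [NormedAddCommGroup E]
    [InnerProductSpace ℝ E] {x w : E} (hxw : 0 ≤ ⟪x, w⟫) {t : ℝ} (ht : 0 ≤ t) :
    ‖x‖ ≤ ‖x + t • w‖ := by
  have hsq : ‖x‖ ^ 2 ≤ ‖x + t • w‖ ^ 2 := by
    rw [norm_add_sq_real, real_inner_smul_right]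
    nlinarith [mul_nonneg ht hxw, sq_nonneg ‖t • w‖]
  exact (sq_le_sq₀ (norm_nonneg _) (norm_nonneg _)).mp hsq

theorem inner_smul_sub_smul_sub_nonneg_of_norm_eq {E : Type*} [NormedAddCommGroup E]
    [InnerProductSpace ℝ E] {u v : E} (huv : ‖u‖ = ‖v‖) {a b : ℝ} (ha : 0 ≤ a) (hb : 0 ≤ b) :
    0 ≤ ⟪a • u - b • v, u - v⟫ := by
  have hexpand : ⟪a • u - b • v, u - v⟫ = (a + b) * (‖u‖ * ‖v‖ - ⟪u, v⟫) := by
    simp only [inner_sub_left, inner_sub_right, real_inner_smul_left,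
      real_inner_self_eq_norm_mul_norm, real_inner_comm u v, huv]
    ring
  rw [hexpand]
  exact mul_nonneg (add_nonneg ha hb) (sub_nonneg.mpr (real_inner_le_norm u v))

theorem linear_expansion_moving_robots_no_collision
    {E : Type*} [NormedAddCommGroup E] [InnerProductSpace ℝ E]
    (u v : E) (hu : ‖u‖ = 1) (hv : ‖v‖ = 1)
    (a b t : ℝ) (ha : 0 ≤ a) (hb : 0 ≤ b) (ht : 0 ≤ t) :
    ‖a • u - b • v‖ ≤ ‖(a + t) • u - (b + t) • v‖ ∧
      ∀ r : ℝ, 0 < r → 2 * r < ‖a • u - b • v‖ →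
        2 * r < ‖(a + t) • u - (b + t) • v‖ := by
  have hsplit : (a + t) • u - (b + t) • v = (a • u - b • v) + t • (u - v) := by module
  have hmono : ‖a • u - b • v‖ ≤ ‖(a + t) • u - (b + t) • v‖ := by
    rw [hsplit]
    exact norm_le_norm_add_smul_of_inner_nonneg
      (inner_smul_sub_smul_sub_nonneg_of_norm_eq (hu.trans hv.symm) ha hb) ht
  exact ⟨hmono, fun r _ hr => hr.trans_le hmono⟩
end

section
/- Let E be a real inner product space, let o, p, q ∈ E with q ≠ o and ‖p − o‖ ≤ ‖q − o‖. Then the function s ↦ ‖(q + s•(‖q − o‖⁻¹ • (q − o))) − p‖ is monotone nondecreasing for s ≥ 0. In words: if a robot at p has stopped, and another robot at q that is at least as far from the expansion center o moves radially away from o at unit speed, the distance between the two robots never decreases. -/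
open RealInnerProductSpace

theorem stopped_robot_dist_nondecreasing
    {E : Type*} [NormedAddCommGroup E] [InnerProductSpace ℝ E]
    (o p q : E) (hq : q ≠ o) (h : ‖p - o‖ ≤ ‖q - o‖) :
    ∀ s₁ s₂ : ℝ, 0 ≤ s₁ → s₁ ≤ s₂ →
      ‖(q + s₁ • (‖q - o‖⁻¹ • (q - o))) - p‖ ≤
        ‖(q + s₂ • (‖q - o‖⁻¹ • (q - o))) - p‖ := by
  intro s₁ s₂ hs₁ hs
  set u : E := ‖q - o‖⁻¹ • (q - o) with hu
  have hqo : (0:ℝ) < ‖q - o‖ := by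
    simpa [norm_pos_iff, sub_eq_zero] using hq
  have hinner0 : 0 ≤ ⟪q - p, q - o⟫ := by
    have hv : q - p = (q - o) - (p - o) := by abel
    rw [hv, inner_sub_left, real_inner_self_eq_norm_sq]
    have hcs := real_inner_le_norm (p - o) (q - o)
    nlinarith [norm_nonneg (p - o)]
  have hinner : 0 ≤ ⟪q - p, u⟫ := by
    rw [hu, real_inner_smul_right]
    exact mul_nonneg (inv_nonneg.mpr hqo.le) hinner0
  have key : ∀ s : ℝ, (q + s • u) - p = (q - p) + s • u := fun s => by abel
  have hsq : ∀ s : ℝ, ‖(q + s • u) - p‖ ^ 2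
      = ‖q - p‖ ^ 2 + 2 * (s * ⟪q - p, u⟫) + s ^ 2 * ‖u‖ ^ 2 := by
    intro s
    rw [key s, norm_add_sq_real, real_inner_smul_right, norm_smul, Real.norm_eq_abs]
    rw [mul_pow, sq_abs]

  have h2 : ‖(q + s₁ • u) - p‖ ^ 2 ≤ ‖(q + s₂ • u) - p‖ ^ 2 := by
    rw [hsq s₁, hsq s₂]
    have : s₁ ^ 2 ≤ s₂ ^ 2 := by nlinarith
    nlinarith [sq_nonneg ‖u‖]
  nlinarith [norm_nonneg ((q + s₁ • u) - p), norm_nonneg ((q + s₂ • u) - p)]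
end

section
/- Let E be a real inner product space, o ∈ E, and λ ≥ 1 a real number (the scaling factor). For x ∈ E with x ≠ o, define the linear-expansion trajectory p_x : ℝ → E by p_x(t) = o + ((‖x − o‖ + min t ((λ − 1)·‖x − o‖)) / ‖x − o‖) • (x − o), i.e. the point moves radially away from o at unit speed and stops after traveling distance (λ−1)‖x − o‖. Then for any two points x, y ∈ E with x ≠ o and y ≠ o, and any reals 0 ≤ s ≤ t, one has ‖p_x(s) − p_y(s)‖ ≤ ‖p_x(t) − p_y(t)‖. In particular, pairwise distances never decrease during linear expansion, so linear expansion is always collision-free. -/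
open scoped RealInnerProductSpace


/-- The linear-expansion trajectory of a robot starting at `x`, expanding
radially away from the center `o` at unit speed, stopping after traveling
distance `(lam - 1) * ‖x - o‖`. -/
noncomputable def linearExpansionTraj {E : Type*} [NormedAddCommGroup E]
    [InnerProductSpace ℝ E] (o : E) (lam : ℝ) (x : E) (t : ℝ) : E :=
  o + ((‖x - o‖ + min t ((lam - 1) * ‖x - o‖)) / ‖x - o‖) • (x - o)

private lemma min_sub_min_mono {s t X Y : ℝ} (hst : s ≤ t) (hXY : Y ≤ X) :
    min s X - min s Y ≤ min t X - min t Y := by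
  simp only [min_def]; split_ifs <;> linarith

private lemma key_norm_mono {E : Type*} [NormedAddCommGroup E] [InnerProductSpace ℝ E]
    (a b : E) (hA : 0 < ‖a‖) (hB : 0 < ‖b‖) {p q p' q' : ℝ}
    (hp : 0 ≤ p) (hq : 0 ≤ q) (hpp : p ≤ p') (hqq : q ≤ q')
    (hd : |p - q| ≤ |p' - q'|) :
    ‖(p / ‖a‖) • a - (q / ‖b‖) • b‖ ≤ ‖(p' / ‖a‖) • a - (q' / ‖b‖) • b‖ := by
  set A := ‖a‖
  set B := ‖b‖
  set e : ℝ := ⟪a, b⟫ / (A * B) with he_def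
  have he1 : e ≤ 1 := by
    rw [he_def, div_le_one (by positivity)]
    exact real_inner_le_norm a b
  have hC : ⟪a, b⟫ = e * (A * B) := by
    rw [he_def]; field_simp
  have sq_eq : ∀ P Q : ℝ, 0 ≤ P → 0 ≤ Q →
      ‖(P / A) • a - (Q / B) • b‖ ^ 2 = P ^ 2 - 2 * P * Q * e + Q ^ 2 := by
    intro P Q hP hQ
    rw [norm_sub_sq_real, real_inner_smul_left, real_inner_smul_right, norm_smul, norm_smul,
      Real.norm_of_nonneg (div_nonneg hP hA.le), Real.norm_of_nonneg (div_nonneg hQ hB.le), hC]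
    field_simp
    ring
  have h1 : (p - q) ^ 2 ≤ (p' - q') ^ 2 := by
    rw [← sq_abs (p - q), ← sq_abs (p' - q')]
    exact pow_le_pow_left₀ (abs_nonneg _) hd 2
  have h2 : p * q ≤ p' * q' := mul_le_mul hpp hqq hq (hp.trans hpp)
  have h3 : 0 ≤ (p' * q' - p * q) * (1 - e) :=
    mul_nonneg (by linarith) (by linarith)
  have hsq : ‖(p / A) • a - (q / B) • b‖ ^ 2 ≤ ‖(p' / A) • a - (q' / B) • b‖ ^ 2 := by
    rw [sq_eq p q hp hq, sq_eq p' q' (hp.trans hpp) (hq.trans hqq)]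
    nlinarith [h1, h3]
  have := Real.sqrt_le_sqrt hsq
  rwa [Real.sqrt_sq (norm_nonneg _), Real.sqrt_sq (norm_nonneg _)] at this

private lemma expansion_aux {E : Type*} [NormedAddCommGroup E] [InnerProductSpace ℝ E]
    (o : E) (lam : ℝ) (hlam : 1 ≤ lam)
    (x y : E) (hx : x ≠ o) (hy : y ≠ o) (hAB : ‖y - o‖ ≤ ‖x - o‖)
    (s t : ℝ) (hs : 0 ≤ s) (hst : s ≤ t) :
    ‖linearExpansionTraj o lam x s - linearExpansionTraj o lam y s‖ ≤
      ‖linearExpansionTraj o lam x t - linearExpansionTraj o lam y t‖ := by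
  set a := x - o with ha
  set b := y - o with hb
  have hA : 0 < ‖a‖ := by rw [ha, norm_pos_iff, sub_ne_zero]; exact hx
  have hB : 0 < ‖b‖ := by rw [hb, norm_pos_iff, sub_ne_zero]; exact hy
  set A := ‖a‖
  set B := ‖b‖
  have hc : (0:ℝ) ≤ lam - 1 := by linarith
  have hdiff : ∀ r : ℝ, linearExpansionTraj o lam x r - linearExpansionTraj o lam y r =
      ((A + min r ((lam - 1) * A)) / A) • a - ((B + min r ((lam - 1) * B)) / B) • b := by
    intro r
    simp only [linearExpansionTraj, ← ha, ← hb]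
    abel
  rw [hdiff s, hdiff t]
  have hmin_nonneg : ∀ r : ℝ, 0 ≤ r → ∀ X : ℝ, 0 ≤ X → 0 ≤ min r ((lam - 1) * X) :=
    fun r hr X hX => le_min hr (mul_nonneg hc hX)
  have hBA : (lam - 1) * B ≤ (lam - 1) * A := mul_le_mul_of_nonneg_left hAB hc
  have hms : min s ((lam - 1) * B) ≤ min s ((lam - 1) * A) := min_le_min le_rfl hBA
  have hmt : min t ((lam - 1) * B) ≤ min t ((lam - 1) * A) := min_le_min le_rfl hBA
  have hmono := min_sub_min_mono (X := (lam - 1) * A) (Y := (lam - 1) * B) hst hBA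
  apply key_norm_mono a b hA hB
  · have := hmin_nonneg s hs A hA.le; linarith
  · have := hmin_nonneg s hs B hB.le; linarith
  · have : min s ((lam - 1) * A) ≤ min t ((lam - 1) * A) := min_le_min hst le_rfl
    linarith
  · have : min s ((lam - 1) * B) ≤ min t ((lam - 1) * B) := min_le_min hst le_rfl
    linarith
  · rw [abs_of_nonneg (by linarith), abs_of_nonneg (by linarith)]
    linarith

theorem linear_expansion_collision_free
    {E : Type*} [NormedAddCommGroup E] [InnerProductSpace ℝ E]
    (o : E) (lam : ℝ) (hlam : 1 ≤ lam)
    (x y : E) (hx : x ≠ o) (hy : y ≠ o)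
    (s t : ℝ) (hs : 0 ≤ s) (hst : s ≤ t) :
    ‖linearExpansionTraj o lam x s - linearExpansionTraj o lam y s‖ ≤
      ‖linearExpansionTraj o lam x t - linearExpansionTraj o lam y t‖ := by
  rcases le_total ‖y - o‖ ‖x - o‖ with hAB | hAB
  · exact expansion_aux o lam hlam x y hx hy hAB s t hs hst
  · rw [norm_sub_rev, norm_sub_rev (linearExpansionTraj o lam x t)]
    exact expansion_aux o lam hlam y x hy hx hAB s t hs hst
end

section
/- Let n, m be natural numbers with 2·m ≤ n, and let B : Fin n → Finset (Fin n) be a family of subsets with 4·(B i).card ≤ n for every i. Then 2^m · card { σ ∈ Equiv.Perm (Fin n) | ∀ i : Fin n, (i : ℕ) < m → σ i ∈ B i } ≤ n!. In words: if each of the first m ≤ n/2 robots has a prescribed 'bad' set of at most n/4 goal positions, then the fraction of the n! labelings in which every one of these m robots receives a goal from its bad set is at most (1/2)^m. -/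
open Finset Equiv

-- card of filter of small indices
lemma filter_lt_card (n m : ℕ) (h : m ≤ n) :
    (univ.filter fun i : Fin n => (i : ℕ) < m).card = m := by
  have : (univ.filter fun i : Fin n => (i : ℕ) < m)
      = Finset.map (Fin.castLEEmb h) univ := by
    ext i
    simp only [mem_filter, mem_univ, true_and, Finset.mem_map, Fin.castLEEmb, Fin.castLE]
    constructor
    · intro hi
      exact ⟨⟨i, hi⟩, by simp⟩
    · rintro ⟨j, -, rfl⟩
      simpa using j.isLt
  rw [this, card_map, card_univ, Fintype.card_fin]

lemma step (n m : ℕ) (hmn : m < n) (B : Fin n → Finset (Fin n)) :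
    (n - m) * (univ.filter fun σ : Equiv.Perm (Fin n) =>
        ∀ i : Fin n, (i : ℕ) < m + 1 → σ i ∈ B i).card
    ≤ (B ⟨m, hmn⟩).card * (univ.filter fun σ : Equiv.Perm (Fin n) =>
        ∀ i : Fin n, (i : ℕ) < m → σ i ∈ B i).card := by
  set p : Fin n := ⟨m, hmn⟩ with hp
  set F : Finset (Equiv.Perm (Fin n)) :=
    univ.filter fun σ => ∀ i : Fin n, (i : ℕ) < m → σ i ∈ B i with hF
  have hF' : (univ.filter fun σ : Equiv.Perm (Fin n) =>
      ∀ i : Fin n, (i : ℕ) < m + 1 → σ i ∈ B i)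
      = F.filter fun σ => σ p ∈ B p := by
    ext σ
    simp only [hF, mem_filter, mem_univ, true_and]
    constructor
    · intro h
      exact ⟨fun i hi => h i (by omega), h p (by simp [hp])⟩
    · rintro ⟨h1, h2⟩ i hi
      rcases Nat.lt_or_ge (i : ℕ) m with h | h
      · exact h1 i h
      · have : i = p := Fin.ext (by simp [hp]; omega)
        rw [this]; exact h2
  rw [hF']
  -- fiberwise decomposition over the value at p
  have hsum : (F.filter fun σ => σ p ∈ B p).card
      = ∑ b ∈ B p, ((F.filter fun σ => σ p ∈ B p).filter fun σ => σ p = b).card := by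
    apply Finset.card_eq_sum_card_fiberwise
    intro σ hσ
    exact (mem_filter.mp hσ).2
  have hfib : ∀ b ∈ B p, ((F.filter fun σ => σ p ∈ B p).filter fun σ => σ p = b)
      = F.filter fun σ => σ p = b := by
    intro b hb
    ext σ
    simp only [mem_filter, and_assoc]
    constructor
    · rintro ⟨h1, h2, h3⟩; exact ⟨h1, h3⟩
    · rintro ⟨h1, h3⟩; exact ⟨h1, h3 ▸ hb, h3⟩
  -- key bound for each fiber
  have key : ∀ b : Fin n, (n - m) * (F.filter fun σ => σ p = b).card ≤ F.card := by
    intro b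
    set Q : Finset (Fin n) := univ.filter fun q : Fin n => m ≤ (q : ℕ) with hQ
    have hQcard : Q.card = n - m := by
      have h1 : Q = (univ.filter fun i : Fin n => (i : ℕ) < m)ᶜ := by
        ext q; simp only [hQ, mem_filter, mem_univ, true_and, Finset.mem_compl, not_lt]
      rw [h1, card_compl, filter_lt_card n m hmn.le, Fintype.card_fin]
    -- each translated fiber has the same cardinality
    have hsame : ∀ q ∈ Q, (F.filter fun σ => σ q = b).card
        = (F.filter fun σ => σ p = b).card := by
      intro q hq
      have hqm : m ≤ (q : ℕ) := (mem_filter.mp hq).2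
      apply Finset.card_bij' (fun σ _ => σ * Equiv.swap p q) (fun σ _ => σ * Equiv.swap p q)
      · intro σ hσ
        simp only [hF, mem_filter, mem_univ, true_and] at hσ ⊢
        obtain ⟨h1, h2⟩ := hσ
        constructor
        · intro i hi
          have hpv : (p : ℕ) = m := rfl
          have hip : i ≠ p := Fin.ne_of_val_ne (by omega)
          have hiq : i ≠ q := Fin.ne_of_val_ne (by omega)
          simpa [Equiv.Perm.mul_apply, Equiv.swap_apply_of_ne_of_ne hip hiq] using h1 i hi
        · simpa [Equiv.Perm.mul_apply, Equiv.swap_apply_right] using h2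
      · intro σ hσ
        simp only [hF, mem_filter, mem_univ, true_and] at hσ ⊢
        obtain ⟨h1, h2⟩ := hσ
        constructor
        · intro i hi
          have hpv : (p : ℕ) = m := rfl
          have hip : i ≠ p := Fin.ne_of_val_ne (by omega)
          have hiq : i ≠ q := Fin.ne_of_val_ne (by omega)
          simpa [Equiv.Perm.mul_apply, Equiv.swap_apply_of_ne_of_ne hip hiq] using h1 i hi
        · simpa [Equiv.Perm.mul_apply, Equiv.swap_apply_left] using h2
      · intro σ _; simp [mul_assoc, Equiv.swap_mul_self]
      · intro σ _; simp [mul_assoc, Equiv.swap_mul_self]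
    -- disjointness of fibers over positions
    have hdisj : (Q : Set (Fin n)).PairwiseDisjoint
        (fun q => F.filter fun σ => σ q = b) := by
      intro q1 h1 q2 h2 hne
      simp only [Finset.disjoint_left, mem_filter]
      rintro σ ⟨-, hq1⟩ ⟨-, hq2⟩
      exact hne (σ.injective (hq1.trans hq2.symm))
    have hsub : Q.biUnion (fun q => F.filter fun σ => σ q = b) ⊆ F :=
      Finset.biUnion_subset.mpr fun q _ => filter_subset _ _
    calc (n - m) * (F.filter fun σ => σ p = b).card
        = ∑ q ∈ Q, (F.filter fun σ => σ q = b).card := by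
          rw [Finset.sum_congr rfl hsame, Finset.sum_const, hQcard, smul_eq_mul]
      _ = (Q.biUnion (fun q => F.filter fun σ => σ q = b)).card :=
          (Finset.card_biUnion (fun q h1 q2 h2 hne => hdisj h1 h2 hne)).symm
      _ ≤ F.card := Finset.card_le_card hsub
  calc (n - m) * (F.filter fun σ => σ p ∈ B p).card
      = ∑ b ∈ B p, (n - m) * (F.filter fun σ => σ p = b).card := by
        rw [hsum, Finset.mul_sum]
        exact Finset.sum_congr rfl fun b hb => by rw [hfib b hb]
    _ ≤ ∑ _b ∈ B p, F.card := Finset.sum_le_sum fun b _ => key b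
    _ = (B p).card * F.card := by rw [Finset.sum_const, smul_eq_mul]

lemma main_ind (n : ℕ) (B : Fin n → Finset (Fin n)) :
    ∀ m, m ≤ n →
    (∏ i ∈ univ.filter (fun i : Fin n => (i : ℕ) < m), (n - (i : ℕ))) *
      (univ.filter fun σ : Equiv.Perm (Fin n) =>
        ∀ i : Fin n, (i : ℕ) < m → σ i ∈ B i).card
    ≤ (∏ i ∈ univ.filter (fun i : Fin n => (i : ℕ) < m), (B i).card) * n.factorial := by
  intro m
  induction m with
  | zero =>
    intro _
    have h0 : (univ.filter fun i : Fin n => (i : ℕ) < 0) = ∅ := by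
      ext i; simp
    have h1 : (univ.filter fun σ : Equiv.Perm (Fin n) =>
        ∀ i : Fin n, (i : ℕ) < 0 → σ i ∈ B i) = univ := by
      ext σ; simp
    rw [h0, h1]
    simp [card_univ, Fintype.card_perm]
  | succ m ih =>
    intro hmn1
    have hmn : m < n := hmn1
    have hins : (univ.filter fun i : Fin n => (i : ℕ) < m + 1)
        = insert ⟨m, hmn⟩ (univ.filter fun i : Fin n => (i : ℕ) < m) := by
      ext i
      simp only [mem_filter, mem_univ, true_and, Finset.mem_insert]
      constructor
      · intro h
        rcases Nat.lt_or_ge (i : ℕ) m with h' | h'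
        · exact Or.inr h'
        · exact Or.inl (Fin.ext (by simp only [Fin.val_mk]; omega))
      · rintro (rfl | h)
        · simp only [Fin.val_mk]; omega
        · omega
    have hnotmem : (⟨m, hmn⟩ : Fin n) ∉ univ.filter (fun i : Fin n => (i : ℕ) < m) := by
      simp
    rw [hins, Finset.prod_insert hnotmem, Finset.prod_insert hnotmem]
    calc (n - m) * (∏ i ∈ univ.filter (fun i : Fin n => (i : ℕ) < m), (n - (i : ℕ))) *
          (univ.filter fun σ : Equiv.Perm (Fin n) =>
            ∀ i : Fin n, (i : ℕ) < m + 1 → σ i ∈ B i).card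
        = (∏ i ∈ univ.filter (fun i : Fin n => (i : ℕ) < m), (n - (i : ℕ))) *
          ((n - m) * (univ.filter fun σ : Equiv.Perm (Fin n) =>
            ∀ i : Fin n, (i : ℕ) < m + 1 → σ i ∈ B i).card) := by ring
      _ ≤ (∏ i ∈ univ.filter (fun i : Fin n => (i : ℕ) < m), (n - (i : ℕ))) *
          ((B ⟨m, hmn⟩).card * (univ.filter fun σ : Equiv.Perm (Fin n) =>
            ∀ i : Fin n, (i : ℕ) < m → σ i ∈ B i).card) :=
          Nat.mul_le_mul_left _ (step n m hmn B)
      _ = (B ⟨m, hmn⟩).card * ((∏ i ∈ univ.filter (fun i : Fin n => (i : ℕ) < m), (n - (i : ℕ))) *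
          (univ.filter fun σ : Equiv.Perm (Fin n) =>
            ∀ i : Fin n, (i : ℕ) < m → σ i ∈ B i).card) := by ring
      _ ≤ (B ⟨m, hmn⟩).card *
          ((∏ i ∈ univ.filter (fun i : Fin n => (i : ℕ) < m), (B i).card) * n.factorial) :=
          Nat.mul_le_mul_left _ (ih (by omega))
      _ = (B ⟨m, hmn⟩).card *
          (∏ i ∈ univ.filter (fun i : Fin n => (i : ℕ) < m), (B i).card) * n.factorial := by ring

theorem perm_all_bad_count_bound
    (n m : ℕ) (hm : 2 * m ≤ n) (B : Fin n → Finset (Fin n))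
    (hB : ∀ i, 4 * (B i).card ≤ n) :
    2 ^ m *
        (Finset.univ.filter fun σ : Equiv.Perm (Fin n) =>
          ∀ i : Fin n, (i : ℕ) < m → σ i ∈ B i).card
      ≤ Nat.factorial n := by
  have hmn : m ≤ n := by omega
  set S := univ.filter (fun i : Fin n => (i : ℕ) < m) with hS
  set C := (Finset.univ.filter fun σ : Equiv.Perm (Fin n) =>
      ∀ i : Fin n, (i : ℕ) < m → σ i ∈ B i).card with hC
  have hmain := main_ind n B m hmn
  rw [← hS, ← hC] at hmain
  have hScard : S.card = m := filter_lt_card n m hmn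
  -- termwise bound: 2 * (B i).card ≤ n - i for i ∈ S
  have hterm : ∀ i ∈ S, 2 * (B i).card ≤ n - (i : ℕ) := by
    intro i hi
    have hi' : (i : ℕ) < m := (mem_filter.mp hi).2
    have := hB i
    omega
  have hprod : 2 ^ m * (∏ i ∈ S, (B i).card) ≤ ∏ i ∈ S, (n - (i : ℕ)) := by
    calc 2 ^ m * (∏ i ∈ S, (B i).card)
        = ∏ i ∈ S, 2 * (B i).card := by
          rw [Finset.prod_mul_distrib, Finset.prod_const, hScard]
      _ ≤ ∏ i ∈ S, (n - (i : ℕ)) := Finset.prod_le_prod' hterm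
  by_cases hE : (∏ i ∈ S, (B i).card) = 0
  · -- some B i is empty with i < m, so the filter is empty
    rw [Finset.prod_eq_zero_iff] at hE
    obtain ⟨i, hiS, hBi⟩ := hE
    have hi' : (i : ℕ) < m := (mem_filter.mp hiS).2
    have hCz : C = 0 := by
      rw [hC, Finset.card_eq_zero]
      ext σ
      simp only [mem_filter, mem_univ, true_and, Finset.notMem_empty, iff_false]
      intro h
      have := h i hi'
      rw [Finset.card_eq_zero.mp hBi] at this
      exact absurd this (Finset.notMem_empty _)
    rw [hCz, Nat.mul_zero]
    exact Nat.zero_le _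
  · have hEpos : 0 < ∏ i ∈ S, (B i).card := Nat.pos_of_ne_zero hE
    have : (∏ i ∈ S, (B i).card) * (2 ^ m * C) ≤ (∏ i ∈ S, (B i).card) * n.factorial := by
      calc (∏ i ∈ S, (B i).card) * (2 ^ m * C)
          = (2 ^ m * (∏ i ∈ S, (B i).card)) * C := by ring
        _ ≤ (∏ i ∈ S, (n - (i : ℕ))) * C := Nat.mul_le_mul_right _ hprod
        _ ≤ (∏ i ∈ S, (B i).card) * n.factorial := hmain
    exact Nat.le_of_mul_le_mul_left this hEpos
end

section
/- Let n ≥ 1 be a natural number, c ≥ 0 a real number, and let d : Fin n → Fin n → ℝ be a function with d j k ≥ 0 for all j, k, such that for every j ∈ Fin n, the set { k | c ≤ d j k } has cardinality at least 3n/4 (i.e., 4 · card{ k | c ≤ d j k } ≥ 3·n). Then 4 · ∑ over all permutations σ of Fin n of (∑_{j} d j (σ j)) ≥ 3 · n · c · n!. Hence the average over all n! labelings of the total straight-line distance ∑_j d j (σ j) is at least (3/4)·n·c. -/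
open Finset

lemma sum_perm_apply {m : ℕ} (j : Fin (m + 1)) (f : Fin (m + 1) → ℝ) :
    ∑ σ : Equiv.Perm (Fin (m + 1)), f (σ j) = (Nat.factorial m : ℝ) * ∑ k, f k := by
  have h0 : ∑ σ : Equiv.Perm (Fin (m + 1)), f (σ j)
      = ∑ σ : Equiv.Perm (Fin (m + 1)), f (σ 0) := by
    apply Fintype.sum_equiv (Equiv.mulRight (Equiv.swap 0 j))
    intro σ
    simp [Equiv.Perm.mul_apply]
  rw [h0, ← (Equiv.Perm.decomposeFin (n := m)).symm.sum_comp (fun σ => f (σ 0))]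
  rw [Fintype.sum_prod_type]
  simp only [Equiv.Perm.decomposeFin_symm_apply_zero]
  simp [Finset.sum_const, Fintype.card_perm, mul_comm]
  rw [Finset.mul_sum]
  simp [mul_comm]

theorem average_total_distance_lower_bound
    (n : ℕ) (hn : 1 ≤ n) (c : ℝ) (hc : 0 ≤ c)
    (d : Fin n → Fin n → ℝ) (hd : ∀ j k, 0 ≤ d j k)
    (hfar : ∀ j : Fin n, 3 * n ≤ 4 * (Finset.univ.filter fun k : Fin n => c ≤ d j k).card) :
    3 * (n : ℝ) * c * (Nat.factorial n : ℝ)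
      ≤ 4 * ∑ σ : Equiv.Perm (Fin n), ∑ j : Fin n, d j (σ j) := by
  obtain ⟨m, rfl⟩ : ∃ m, n = m + 1 := ⟨n - 1, (Nat.succ_pred_eq_of_pos hn).symm⟩
  rw [Finset.sum_comm]
  have key : ∀ j : Fin (m + 1), 3 * ((m + 1 : ℕ) : ℝ) * c ≤ 4 * ∑ k, d j k := by
    intro j
    set S := Finset.univ.filter fun k : Fin (m + 1) => c ≤ d j k with hS
    have h2 : (S.card : ℝ) * c ≤ ∑ k, d j k := by
      calc (S.card : ℝ) * c = ∑ _k ∈ S, c := by rw [Finset.sum_const, nsmul_eq_mul]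
        _ ≤ ∑ k ∈ S, d j k := Finset.sum_le_sum fun k hk => (Finset.mem_filter.mp hk).2
        _ ≤ ∑ k, d j k := Finset.sum_le_sum_of_subset_of_nonneg (Finset.subset_univ S)
            (fun k _ _ => hd j k)
    have h1 : 3 * ((m + 1 : ℕ) : ℝ) * c ≤ 4 * ((S.card : ℝ) * c) := by
      have := hfar j
      have hc' : (3 * (m + 1 : ℕ) : ℝ) ≤ (4 * S.card : ℕ) := by exact_mod_cast this
      push_cast at hc' ⊢
      nlinarith
    linarith
  calc 3 * ((m + 1 : ℕ) : ℝ) * c * (Nat.factorial (m + 1) : ℝ)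
      = ∑ j : Fin (m + 1), (Nat.factorial m : ℝ) * (3 * ((m + 1 : ℕ) : ℝ) * c) := by
        rw [Finset.sum_const, nsmul_eq_mul, Nat.factorial_succ]
        simp [Finset.card_univ]
        ring
    _ ≤ ∑ j : Fin (m + 1), (Nat.factorial m : ℝ) * (4 * ∑ k, d j k) :=
        Finset.sum_le_sum fun j _ => mul_le_mul_of_nonneg_left (key j)
          (by positivity)
    _ = 4 * ∑ j : Fin (m + 1), ∑ σ : Equiv.Perm (Fin (m + 1)), d j (σ j) := by
        rw [Finset.mul_sum]
        apply Finset.sum_congr rfl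
        intro j _
        rw [sum_perm_apply j (d j)]
        ring
end

section
/- Let E be a real inner product space, let ℓ ≥ 0 be a real number, and let p, a, b ∈ E satisfy ‖a − b‖ ≤ ℓ, ‖p − a‖ ≥ ℓ, and ‖p − b‖ ≥ ℓ. Then for every t ∈ [0,1], ‖p − ((1−t)•a + t•b)‖ ≥ (√3/2)·ℓ; that is, the distance from p to the segment with endpoints a and b is at least (√3/2)·ℓ. -/
/-! The squared distance from `p` to the point of parameter `t` on the segment is
`(1 - t) ‖p - a‖² + t ‖p - b‖² - t (1 - t) ‖a - b‖²`, which is at least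
`ℓ² - t (1 - t) ℓ² ≥ (3 / 4) ℓ²` because `t (1 - t) ≤ 1 / 4`. -/

section InnerProductSpace

variable {E : Type*} [NormedAddCommGroup E] [InnerProductSpace ℝ E]

theorem norm_one_sub_smul_add_smul_sq (u v : E) (t : ℝ) :
    ‖(1 - t) • u + t • v‖ ^ 2 = (1 - t) * ‖u‖ ^ 2 + t * ‖v‖ ^ 2 - t * (1 - t) * ‖u - v‖ ^ 2 := by
  rw [norm_add_sq_real, norm_sub_sq_real, norm_smul, norm_smul, inner_smul_left, inner_smul_right,
    mul_pow, mul_pow, Real.norm_eq_abs, Real.norm_eq_abs, sq_abs, sq_abs, RCLike.conj_to_real]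
  ring

theorem sq_le_norm_one_sub_smul_add_smul_sq {ℓ : ℝ} {u v : E}
    (hu : ℓ ≤ ‖u‖) (hv : ℓ ≤ ‖v‖) (huv : ‖u - v‖ ≤ ℓ) {t : ℝ} (ht : t ∈ Set.Icc (0 : ℝ) 1) :
    3 / 4 * ℓ ^ 2 ≤ ‖(1 - t) • u + t • v‖ ^ 2 := by
  obtain ⟨ht₀, ht₁⟩ := ht
  have hℓ : 0 ≤ ℓ := (norm_nonneg _).trans huv
  have hquarter : t * (1 - t) ≤ 1 / 4 := by nlinarith [sq_nonneg (t - 1 / 2)]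
  have ht₁' : 0 ≤ 1 - t := sub_nonneg.2 ht₁
  calc 3 / 4 * ℓ ^ 2 ≤ (1 - t) * ℓ ^ 2 + t * ℓ ^ 2 - t * (1 - t) * ℓ ^ 2 := by
        nlinarith [sq_nonneg ℓ]
    _ ≤ (1 - t) * ‖u‖ ^ 2 + t * ‖v‖ ^ 2 - t * (1 - t) * ‖u - v‖ ^ 2 := by gcongr
    _ = ‖(1 - t) • u + t • v‖ ^ 2 := (norm_one_sub_smul_add_smul_sq u v t).symm

end InnerProductSpace

theorem dist_to_segment_lower_bound_general
    {E : Type*} [NormedAddCommGroup E] [InnerProductSpace ℝ E]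
    (ℓ : ℝ) (p a b : E)
    (hab : ‖a - b‖ ≤ ℓ) (hpa : ℓ ≤ ‖p - a‖) (hpb : ℓ ≤ ‖p - b‖) :
    ∀ t : ℝ, t ∈ Set.Icc (0 : ℝ) 1 →
      Real.sqrt 3 / 2 * ℓ ≤ ‖p - ((1 - t) • a + t • b)‖ := by
  intro t ht
  have hdiff : (p - a) - (p - b) = b - a := by abel
  have hsq := sq_le_norm_one_sub_smul_add_smul_sq hpa hpb
    (by rwa [hdiff, norm_sub_rev]) ht
  have hpoint : (1 - t) • (p - a) + t • (p - b) = p - ((1 - t) • a + t • b) := by module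
  rw [hpoint] at hsq
  refine le_of_sq_le_sq ?_ (norm_nonneg _)
  calc (Real.sqrt 3 / 2 * ℓ) ^ 2 = 3 / 4 * ℓ ^ 2 := by
        rw [mul_pow, div_pow, Real.sq_sqrt (by norm_num)]; norm_num
    _ ≤ _ := hsq

theorem dist_to_segment_lower_bound
    {E : Type*} [NormedAddCommGroup E] [InnerProductSpace ℝ E]
    (ℓ : ℝ) (hℓ : 0 ≤ ℓ) (p a b : E)
    (hab : ‖a - b‖ ≤ ℓ) (hpa : ℓ ≤ ‖p - a‖) (hpb : ℓ ≤ ‖p - b‖) :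
    ∀ t : ℝ, t ∈ Set.Icc (0 : ℝ) 1 →
      Real.sqrt 3 / 2 * ℓ ≤ ‖p - ((1 - t) • a + t • b)‖ :=
  dist_to_segment_lower_bound_general ℓ p a b hab hpa hpb
end

section
/- Work in the Euclidean plane ℝ² (EuclideanSpace ℝ (Fin 2)). Let ℓ > 0 and let x₁, v₁, x₂, v₂ ∈ ℝ² satisfy: ‖x₁ − v₁‖ ≤ ℓ, ‖x₂ − v₂‖ ≤ ℓ, ‖x₁ − v₂‖ ≥ ℓ, ‖x₂ − v₁‖ ≥ ℓ, ‖v₁ − v₂‖ ≥ ℓ, and ‖x₁ − x₂‖ ≥ 2·ℓ. Then for all s, t ∈ [0,1], ‖(x₁ + s•(v₁ − x₁)) − (x₂ + t•(v₂ − x₂))‖ ≥ (√3/2)·ℓ. In particular, when ℓ > (4/√3)·r, two robots of radius r moving along the straight segments from x₁ to v₁ and from x₂ to v₂ respectively remain collision-free, since (√3/2)·ℓ > 2r. -/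
/-!
The squared distance between the points at parameters `s` and `t` of the two segments is the
bilinear interpolation of the four squared distances between endpoints, minus
`s(1-s)‖v₁ - x₁‖² + t(1-t)‖v₂ - x₂‖²`: the cross term `st⟪v₁ - x₁, v₂ - x₂⟫` cancels.
Bounding the corner `x₁x₂` below by `4ℓ²`, the other three corners below by `ℓ²` and the segment
lengths above by `ℓ` leaves `ℓ² (s² + t² + 3st - 4s - 4t + 4)`, whose minimum on the unit square
is `3ℓ²/4`, attained at `s = 1, t = 1/2`.
-/

theorem three_div_four_le_corner_polynomial {s t : ℝ} (hs : s ≤ 1) (ht : t ≤ 1) :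
    3 / 4 ≤ s ^ 2 + t ^ 2 + 3 * s * t - 4 * s - 4 * t + 4 := by
  nlinarith [sq_nonneg (s - 1 / 2), sq_nonneg (2 * t + 3 * s - 4),
    mul_nonneg (sub_nonneg.2 hs) (sub_nonneg.2 ht)]

section InnerProductSpace

variable {E : Type*} [NormedAddCommGroup E] [InnerProductSpace ℝ E]

theorem norm_add_smul_sq (w b : E) (s : ℝ) :
    ‖w + s • b‖ ^ 2 = (1 - s) * ‖w‖ ^ 2 + s * ‖w + b‖ ^ 2 - s * (1 - s) * ‖b‖ ^ 2 := by
  rw [norm_add_sq_real, norm_add_sq_real, inner_smul_right, norm_smul, Real.norm_eq_abs,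
    mul_pow, sq_abs]
  ring

theorem norm_segment_sub_segment_sq (x₁ v₁ x₂ v₂ : E) (s t : ℝ) :
    ‖(x₁ + s • (v₁ - x₁)) - (x₂ + t • (v₂ - x₂))‖ ^ 2 =
      (1 - s) * (1 - t) * ‖x₁ - x₂‖ ^ 2 + s * (1 - t) * ‖v₁ - x₂‖ ^ 2
        + (1 - s) * t * ‖x₁ - v₂‖ ^ 2 + s * t * ‖v₁ - v₂‖ ^ 2
        - s * (1 - s) * ‖v₁ - x₁‖ ^ 2 - t * (1 - t) * ‖v₂ - x₂‖ ^ 2 := by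
  have hsplit : (x₁ + s • (v₁ - x₁)) - (x₂ + t • (v₂ - x₂)) =
      ((x₁ - x₂) + s • (v₁ - x₁)) + t • (x₂ - v₂) := by module
  have hcorner : (x₁ - x₂) + s • (v₁ - x₁) + (x₂ - v₂) = (x₁ - v₂) + s • (v₁ - x₁) := by abel
  rw [hsplit, norm_add_smul_sq, hcorner, norm_add_smul_sq, norm_add_smul_sq,
    sub_add_sub_cancel', sub_add_sub_cancel', ← norm_neg (x₂ - v₂), neg_sub]
  ring

theorem three_div_four_mul_sq_le_norm_segment_sub_segment_sq
    {ℓ : ℝ} (hℓ : 0 ≤ ℓ) {x₁ v₁ x₂ v₂ : E}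
    (h₁ : ‖x₁ - v₁‖ ≤ ℓ) (h₂ : ‖x₂ - v₂‖ ≤ ℓ) (h₃ : ℓ ≤ ‖x₁ - v₂‖) (h₄ : ℓ ≤ ‖x₂ - v₁‖)
    (h₅ : ℓ ≤ ‖v₁ - v₂‖) (h₆ : 2 * ℓ ≤ ‖x₁ - x₂‖)
    {s t : ℝ} (hs : s ∈ Set.Icc (0 : ℝ) 1) (ht : t ∈ Set.Icc (0 : ℝ) 1) :
    3 / 4 * ℓ ^ 2 ≤ ‖(x₁ + s • (v₁ - x₁)) - (x₂ + t • (v₂ - x₂))‖ ^ 2 := by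
  obtain ⟨hs0, hs1⟩ := hs
  obtain ⟨ht0, ht1⟩ := ht
  have hs' : 0 ≤ 1 - s := sub_nonneg.2 hs1
  have ht' : 0 ≤ 1 - t := sub_nonneg.2 ht1
  rw [norm_sub_rev] at h₁ h₂ h₄
  calc 3 / 4 * ℓ ^ 2
      ≤ ℓ ^ 2 * (s ^ 2 + t ^ 2 + 3 * s * t - 4 * s - 4 * t + 4) := by
        rw [mul_comm]
        exact mul_le_mul_of_nonneg_left (three_div_four_le_corner_polynomial hs1 ht1) (sq_nonneg ℓ)
    _ = (1 - s) * (1 - t) * (2 * ℓ) ^ 2 + s * (1 - t) * ℓ ^ 2 + (1 - s) * t * ℓ ^ 2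
          + s * t * ℓ ^ 2 - s * (1 - s) * ℓ ^ 2 - t * (1 - t) * ℓ ^ 2 := by ring
    _ ≤ (1 - s) * (1 - t) * ‖x₁ - x₂‖ ^ 2 + s * (1 - t) * ‖v₁ - x₂‖ ^ 2
          + (1 - s) * t * ‖x₁ - v₂‖ ^ 2 + s * t * ‖v₁ - v₂‖ ^ 2
          - s * (1 - s) * ‖v₁ - x₁‖ ^ 2 - t * (1 - t) * ‖v₂ - x₂‖ ^ 2 := by
        gcongr
    _ = _ := (norm_segment_sub_segment_sq x₁ v₁ x₂ v₂ s t).symm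

end InnerProductSpace

theorem assign_paths_collision_free
    (ℓ : ℝ) (hℓ : 0 < ℓ)
    (x₁ v₁ x₂ v₂ : EuclideanSpace ℝ (Fin 2))
    (h₁ : ‖x₁ - v₁‖ ≤ ℓ) (h₂ : ‖x₂ - v₂‖ ≤ ℓ)
    (h₃ : ℓ ≤ ‖x₁ - v₂‖) (h₄ : ℓ ≤ ‖x₂ - v₁‖)
    (h₅ : ℓ ≤ ‖v₁ - v₂‖) (h₆ : 2 * ℓ ≤ ‖x₁ - x₂‖) :
    (∀ s ∈ Set.Icc (0 : ℝ) 1, ∀ t ∈ Set.Icc (0 : ℝ) 1,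
        Real.sqrt 3 / 2 * ℓ ≤ ‖(x₁ + s • (v₁ - x₁)) - (x₂ + t • (v₂ - x₂))‖) ∧
      ∀ r : ℝ, 0 < r → 4 / Real.sqrt 3 * r < ℓ →
        ∀ s ∈ Set.Icc (0 : ℝ) 1, ∀ t ∈ Set.Icc (0 : ℝ) 1,
          2 * r < ‖(x₁ + s • (v₁ - x₁)) - (x₂ + t • (v₂ - x₂))‖ := by
  have separated : ∀ s ∈ Set.Icc (0 : ℝ) 1, ∀ t ∈ Set.Icc (0 : ℝ) 1,
      Real.sqrt 3 / 2 * ℓ ≤ ‖(x₁ + s • (v₁ - x₁)) - (x₂ + t • (v₂ - x₂))‖ := by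
    intro s hs t ht
    refine le_of_pow_le_pow_left₀ two_ne_zero (norm_nonneg _) ?_
    calc (Real.sqrt 3 / 2 * ℓ) ^ 2 = 3 / 4 * ℓ ^ 2 := by
          rw [mul_pow, div_pow, Real.sq_sqrt zero_le_three]; norm_num
      _ ≤ _ := three_div_four_mul_sq_le_norm_segment_sub_segment_sq hℓ.le h₁ h₂ h₃ h₄ h₅ h₆ hs ht
  refine ⟨separated, fun r _ hr s hs t ht => lt_of_lt_of_le ?_ (separated s hs t ht)⟩
  have hsqrt3 : 0 < Real.sqrt 3 := Real.sqrt_pos.2 zero_lt_three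
  calc 2 * r = Real.sqrt 3 / 2 * (4 / Real.sqrt 3 * r) := by field_simp; ring
    _ < Real.sqrt 3 / 2 * ℓ := by gcongr
end
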